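/- Let 0<p<∞ and φ∈𝒢_p with φ(1)=1. Then the growth envelope function 𝔈_G ℳ_{φ,p}(ℝ^n) is bounded on (0,∞) if, and only if, lim_{t→0+} φ(t) > 0. -/

import Mathlib

open MeasureTheory Filter Set ENNReal

noncomputable section

abbrev En (n : ℕ) := EuclideanSpace ℝ (Fin n)

/-- The class `𝒢_p`: nondecreasing positive functions on `(0,∞)` such that
`t ↦ φ(t) t^{-n/p}` is nonincreasing. -/
def GClass (n : ℕ) (p : ℝ) (φ : ℝ → ℝ) : Prop :=
  (∀ t : ℝ, 0 < t → 0 < φ t) ∧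
    ∀ t r : ℝ, 0 < t → t ≤ r → φ t ≤ φ r ∧ φ r ≤ φ t * (r / t) ^ ((n : ℝ) / p)

/-- The axis-parallel compact cube centred at `x` with side length `r`. -/
def cube (n : ℕ) (x : En n) (r : ℝ) : Set (En n) := {y | ∀ i, |y i - x i| ≤ r / 2}

/-- The generalised Morrey quasi-norm `‖f | ℳ_{φ,p}(ℝⁿ)‖`. -/
def morreyNorm {F : Type*} [NormedAddCommGroup F] (n : ℕ) (p : ℝ) (φ : ℝ → ℝ)
    (f : En n → F) : ℝ≥0∞ :=
  ⨆ (x : En n) (r : ℝ) (_ : 0 < r),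
    ENNReal.ofReal (φ r) *
      ((volume (cube n x r))⁻¹ *
        ∫⁻ y in cube n x r, ENNReal.ofReal (‖f y‖ ^ p)) ^ (1 / p)

/-- The decreasing rearrangement `f*(t) = inf{σ>0 : |{x : |f(x)|>σ}| ≤ t}`. -/
def rearr {F : Type*} [NormedAddCommGroup F] (n : ℕ) (f : En n → F) (t : ℝ) : ℝ≥0∞ :=
  sInf {σ : ℝ≥0∞ | 0 < σ ∧ volume {x : En n | σ < ENNReal.ofReal ‖f x‖} ≤ ENNReal.ofReal t}

/-- The growth envelope function of the generalised Morrey space `ℳ_{φ,p}(ℝⁿ)`. -/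
def morreyEnvelope (n : ℕ) (p : ℝ) (φ : ℝ → ℝ) (t : ℝ) : ℝ≥0∞ :=
  ⨆ (f : En n → ℝ) (_ : Measurable f) (_ : morreyNorm n p φ f ≤ 1), rearr n f t

end

/-! If `φ(0+) = 0`, the indicators `φ(r)⁻¹ 𝟙_{Q(0,r)}` lie in the unit ball of `ℳ_{φ,p}` (this
is where `t ↦ φ(t) t^{-n/p}` being nonincreasing enters) and their rearrangements equal `φ(r)⁻¹`
on `(0, rⁿ)`, so the envelope is unbounded. If `φ ≥ c > 0`, then for `f` in the unit ball every
cube average of `|f|^p` is at most `c^{-p}`. A ball of radius `ρ` lies in the cube of side `2ρ`,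
so ball averages are bounded too, and Lebesgue's differentiation theorem bounds `|f|^p`, hence
`f*`, almost everywhere. -/

open Metric Topology

theorem cube_eq_preimage_pi (n : ℕ) (x : En n) (r : ℝ) :
    cube n x r = (MeasurableEquiv.toLp 2 (Fin n → ℝ)).symm ⁻¹'
      univ.pi fun i => Icc (x i - r / 2) (x i + r / 2) := by
  ext y
  simp only [cube, mem_ofPred_eq, mem_preimage, MeasurableEquiv.coe_toLp_symm, Set.mem_pi,
    mem_univ, true_imp_iff, mem_Icc, abs_le]
  exact forall_congr' fun i => by constructor <;> intro h <;> constructor <;> linarith [h.1, h.2]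

theorem measurableSet_cube (n : ℕ) (x : En n) (r : ℝ) : MeasurableSet (cube n x r) := by
  rw [cube_eq_preimage_pi]
  exact (MeasurableEquiv.toLp 2 (Fin n → ℝ)).symm.measurable
    (MeasurableSet.univ_pi fun _ => measurableSet_Icc)

theorem volume_cube {n : ℕ} (x : En n) {r : ℝ} (hr : 0 ≤ r) :
    volume (cube n x r) = ENNReal.ofReal (r ^ n) := by
  rw [cube_eq_preimage_pi,
    (EuclideanSpace.volume_preserving_symm_measurableEquiv_toLp (Fin n)).measure_preimage
      (MeasurableSet.univ_pi fun _ => measurableSet_Icc).nullMeasurableSet,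
    volume_pi_pi]
  simp_rw [Real.volume_Icc, add_sub_sub_cancel, add_halves, Finset.prod_const, Finset.card_univ,
    Fintype.card_fin, ENNReal.ofReal_pow hr]

theorem volume_cube_inter_cube_le {n : ℕ} (x z : En n) {r ρ : ℝ} (hr : 0 ≤ r) (hρ : 0 ≤ ρ) :
    volume (cube n z r ∩ cube n x ρ) ≤ ENNReal.ofReal (min r ρ ^ n) := by
  rcases le_total r ρ with h | h
  · rw [min_eq_left h, ← volume_cube z hr]
    exact measure_mono inter_subset_left
  · rw [min_eq_right h, ← volume_cube x hρ]
    exact measure_mono inter_subset_right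

theorem closedBall_subset_cube {n : ℕ} (x : En n) (ρ : ℝ) :
    closedBall x ρ ⊆ cube n x (2 * ρ) := by
  intro y hy i
  calc |y i - x i| = ‖(y - x) i‖ := rfl
    _ ≤ ‖y - x‖ := PiLp.norm_apply_le _ i
    _ ≤ 2 * ρ / 2 := by rw [← dist_eq_norm]; linarith [mem_closedBall.1 hy]

theorem volume_cube_two_mul {n : ℕ} (x : En n) {ρ : ℝ} (hρ : 0 ≤ ρ) :
    volume (cube n x (2 * ρ)) =
      ENNReal.ofReal (2 ^ n) / volume (closedBall (0 : En n) 1) * volume (closedBall x ρ) := by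
  rw [volume_cube x (by positivity), Measure.addHaar_closedBall' volume x hρ,
    finrank_euclideanSpace_fin, mul_pow, ENNReal.ofReal_mul (by positivity), mul_comm _ (volume _),
    ← mul_assoc, ENNReal.div_mul_cancel (measure_closedBall_pos _ _ one_pos).ne'
      measure_closedBall_lt_top.ne]

namespace GClass

variable {n : ℕ} {p : ℝ} {φ : ℝ → ℝ}

theorem tendsto_nhdsGT_sInf (hφ : GClass n p φ) :
    Tendsto φ (𝓝[>] 0) (𝓝 (sInf (φ '' Ioi 0))) :=
  MonotoneOn.tendsto_nhdsGT (fun _ ht _ _ hts => (hφ.2 _ _ ht hts).1)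
    ⟨0, by rintro _ ⟨t, ht, rfl⟩; exact (hφ.1 t ht).le⟩

theorem le_of_tendsto {c : ℝ} (hφ : GClass n p φ) (hc : Tendsto φ (𝓝[>] 0) (𝓝 c)) {t : ℝ}
    (ht : 0 < t) : c ≤ φ t := by
  rw [tendsto_nhds_unique hc hφ.tendsto_nhdsGT_sInf]
  exact csInf_le ⟨0, by rintro _ ⟨s, hs, rfl⟩; exact (hφ.1 s hs).le⟩ ⟨t, ht, rfl⟩

theorem mul_min_div_rpow_le (hφ : GClass n p φ) {r ρ : ℝ} (hr : 0 < r) (hρ : 0 < ρ) :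
    φ ρ * (min r ρ / ρ) ^ ((n : ℝ) / p) ≤ φ r := by
  rcases le_total ρ r with h | h
  · rw [min_eq_right h, div_self hρ.ne', Real.one_rpow, mul_one]
    exact (hφ.2 ρ r hρ h).1
  · rw [min_eq_left h]
    calc φ ρ * (r / ρ) ^ ((n : ℝ) / p)
        ≤ φ r * (ρ / r) ^ ((n : ℝ) / p) * (r / ρ) ^ ((n : ℝ) / p) := by
          gcongr
          exact (hφ.2 r ρ hr h).2
      _ = φ r := by
          rw [mul_assoc, ← Real.mul_rpow (by positivity) (by positivity),
            show ρ / r * (r / ρ) = 1 by field_simp, Real.one_rpow, mul_one]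

end GClass

theorem ae_le_of_setLIntegral_closedBall_le {β : Type*} [MetricSpace β] [MeasurableSpace β]
    [BorelSpace β] [SecondCountableTopology β] [HasBesicovitchCovering β] {μ : Measure β}
    [IsLocallyFiniteMeasure μ] {g : β → ℝ≥0∞} (hg : Measurable g) {K : ℝ≥0∞} (hK : K ≠ ∞)
    (hball : ∀ x, ∀ ρ > 0, ∫⁻ y in closedBall x ρ, g y ∂μ ≤ K * μ (closedBall x ρ)) :
    ∀ᵐ x ∂μ, g x ≤ K := by
  have hKμ : ∀ s, K * μ s = (K.toNNReal • μ) s := by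
    simp [ENNReal.smul_def, ENNReal.coe_toNNReal hK]
  refine ae_le_of_forall_setLIntegral_le_of_sigmaFinite hg fun s hs _ => ?_
  rw [← withDensity_apply g hs, setLIntegral_const, hKμ]
  refine (Besicovitch.vitaliFamily μ).measure_le_of_frequently_le _
    (withDensity_absolutelyContinuous μ g) s fun x _ => ?_
  refine (Besicovitch.tendsto_filterAt μ x).frequently (Eventually.frequently ?_)
  filter_upwards [self_mem_nhdsWithin] with ρ hρ
  rw [withDensity_apply g measurableSet_closedBall, ← hKμ]
  exact hball x ρ hρ

section Morrey

variable {n : ℕ} {p : ℝ} {φ : ℝ → ℝ}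

theorem rearr_le_of_ae_le {F : Type*} [NormedAddCommGroup F] {f : En n → F} {M : ℝ≥0∞}
    (hM : ∀ᵐ x, ENNReal.ofReal ‖f x‖ ≤ M) (t : ℝ) : rearr n f t ≤ M := by
  refine le_of_forall_gt_imp_ge_of_dense fun σ hσ => sInf_le ⟨hσ.bot_lt, ?_⟩
  have hnull : volume {x | σ < ENNReal.ofReal ‖f x‖} = 0 :=
    measure_mono_null (fun x hx => not_le.2 (hσ.trans hx)) (ae_iff.1 hM)
  rw [hnull]
  exact zero_le

theorem le_rearr_indicator_cube (z : En n) {r a t : ℝ} (hr : 0 < r) (ha : 0 < a)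
    (ht : t < r ^ n) : ENNReal.ofReal a ≤ rearr n ((cube n z r).indicator fun _ => a) t := by
  refine le_sInf fun σ ⟨_, hσ⟩ => not_lt.1 fun hσa => ?_
  have hcube : cube n z r ⊆ {x | σ < ENNReal.ofReal ‖(cube n z r).indicator (fun _ => a) x‖} :=
    fun y hy => by simpa [indicator_of_mem hy, abs_of_pos ha] using hσa
  have := (measure_mono hcube).trans hσ
  rw [volume_cube z hr.le, ENNReal.ofReal_le_ofReal_iff'] at this
  rcases this with h | h <;> linarith [pow_pos hr n]

theorem morreyNorm_indicator_cube_le (hp : 0 < p) (hφ : GClass n p φ) (z : En n) {r a : ℝ}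
    (hr : 0 < r) (ha : 0 ≤ a) :
    morreyNorm n p φ ((cube n z r).indicator fun _ => a) ≤ ENNReal.ofReal (φ r * a) := by
  refine iSup_le fun x => iSup_le fun ρ => iSup_le fun hρ => ?_
  have hpow : (fun y => ENNReal.ofReal (‖(cube n z r).indicator (fun _ => a) y‖ ^ p)) =
      (cube n z r).indicator fun _ => ENNReal.ofReal (a ^ p) := by
    ext y
    by_cases hy : y ∈ cube n z r <;> simp [hy, abs_of_nonneg ha, Real.zero_rpow hp.ne']
  rw [hpow, lintegral_indicator_const (measurableSet_cube n z r),
    Measure.restrict_apply (measurableSet_cube n z r), volume_cube x hρ.le]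
  calc ENNReal.ofReal (φ ρ) * ((ENNReal.ofReal (ρ ^ n))⁻¹ *
        (ENNReal.ofReal (a ^ p) * volume (cube n z r ∩ cube n x ρ))) ^ (1 / p)
      ≤ ENNReal.ofReal (φ ρ) * ((ENNReal.ofReal (ρ ^ n))⁻¹ *
        (ENNReal.ofReal (a ^ p) * ENNReal.ofReal (min r ρ ^ n))) ^ (1 / p) := by
        gcongr
        exact volume_cube_inter_cube_le x z hr.le hρ.le
    _ = ENNReal.ofReal (φ ρ * (a * (min r ρ / ρ) ^ ((n : ℝ) / p))) := by
        have hm : 0 ≤ min r ρ / ρ := by positivity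
        rw [← ENNReal.ofReal_mul (by positivity), ← ENNReal.div_eq_inv_mul,
          ← ENNReal.ofReal_div_of_pos (by positivity),
          ENNReal.ofReal_rpow_of_nonneg (by positivity) (by positivity),
          ← ENNReal.ofReal_mul (hφ.1 ρ hρ).le, mul_div_assoc, ← div_pow,
          Real.mul_rpow (by positivity) (by positivity), ← Real.rpow_natCast,
          ← Real.rpow_mul hm, ← Real.rpow_mul ha, mul_one_div, mul_one_div, div_self hp.ne',
          Real.rpow_one]
    _ ≤ ENNReal.ofReal (φ r * a) := by
        gcongr ENNReal.ofReal ?_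
        calc φ ρ * (a * (min r ρ / ρ) ^ ((n : ℝ) / p))
            = φ ρ * (min r ρ / ρ) ^ ((n : ℝ) / p) * a := by ring
          _ ≤ φ r * a := by gcongr; exact hφ.mul_min_div_rpow_le hr hρ

theorem setLAverage_cube_le_morreyNorm {F : Type*} [NormedAddCommGroup F] (hp : 0 < p)
    (f : En n → F) (x : En n) {r : ℝ} (hr : 0 < r) (hφr : 0 < φ r) :
    (volume (cube n x r))⁻¹ * ∫⁻ y in cube n x r, ENNReal.ofReal (‖f y‖ ^ p) ≤
      (morreyNorm n p φ f / ENNReal.ofReal (φ r)) ^ p := by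
  rw [← ENNReal.rpow_inv_le_iff hp, ENNReal.le_div_iff_mul_le (Or.inl (by simpa using hφr))
    (Or.inl ENNReal.ofReal_ne_top), mul_comm, ← one_div p]
  exact le_iSup₂_of_le x r (le_iSup_of_le hr le_rfl)

theorem setLIntegral_closedBall_le_of_morreyNorm_le {F : Type*} [NormedAddCommGroup F]
    (hp : 0 < p) {f : En n → F} (hf : morreyNorm n p φ f ≤ 1) {c : ℝ} (hc : 0 < c)
    (hcφ : ∀ t, 0 < t → c ≤ φ t) (x : En n) {ρ : ℝ} (hρ : 0 < ρ) :
    ∫⁻ y in closedBall x ρ, ENNReal.ofReal (‖f y‖ ^ p) ≤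
      (ENNReal.ofReal c)⁻¹ ^ p * (ENNReal.ofReal (2 ^ n) / volume (closedBall (0 : En n) 1)) *
        volume (closedBall x ρ) := by
  have h2ρ : 0 < 2 * ρ := by positivity
  have hvol : volume (cube n x (2 * ρ)) ≠ 0 := by
    simpa [volume_cube x h2ρ.le] using pow_pos h2ρ n
  have havg :
      (morreyNorm n p φ f / ENNReal.ofReal (φ (2 * ρ))) ^ p ≤ (ENNReal.ofReal c)⁻¹ ^ p := by
    gcongr
    calc morreyNorm n p φ f / ENNReal.ofReal (φ (2 * ρ)) ≤ 1 / ENNReal.ofReal c := by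
          gcongr
          exact hcφ _ h2ρ
      _ = (ENNReal.ofReal c)⁻¹ := one_div _
  calc ∫⁻ y in closedBall x ρ, ENNReal.ofReal (‖f y‖ ^ p)
      ≤ ∫⁻ y in cube n x (2 * ρ), ENNReal.ofReal (‖f y‖ ^ p) :=
        lintegral_mono_set (closedBall_subset_cube x ρ)
    _ = volume (cube n x (2 * ρ)) * ((volume (cube n x (2 * ρ)))⁻¹ *
          ∫⁻ y in cube n x (2 * ρ), ENNReal.ofReal (‖f y‖ ^ p)) := by
        rw [← mul_assoc, ENNReal.mul_inv_cancel hvol (by simp [volume_cube x h2ρ.le]), one_mul]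
    _ ≤ volume (cube n x (2 * ρ)) * (ENNReal.ofReal c)⁻¹ ^ p := by
        gcongr
        exact (setLAverage_cube_le_morreyNorm hp f x h2ρ (hc.trans_le (hcφ _ h2ρ))).trans havg
    _ = _ := by rw [volume_cube_two_mul x hρ.le]; ring

theorem exists_morreyEnvelope_le (hp : 0 < p) {c : ℝ} (hc : 0 < c)
    (hcφ : ∀ t, 0 < t → c ≤ φ t) : ∃ C : ℝ≥0∞, C ≠ ∞ ∧ ∀ t, morreyEnvelope n p φ t ≤ C := by
  have hK : (ENNReal.ofReal c)⁻¹ ^ p *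
      (ENNReal.ofReal (2 ^ n) / volume (closedBall (0 : En n) 1)) ≠ ∞ :=
    ENNReal.mul_ne_top (ENNReal.rpow_ne_top_of_nonneg hp.le (by simpa using hc))
      (ENNReal.div_ne_top ENNReal.ofReal_ne_top (measure_closedBall_pos _ _ one_pos).ne')
  refine ⟨_, ENNReal.rpow_ne_top_of_nonneg (inv_nonneg.2 hp.le) hK, fun t => ?_⟩
  refine iSup₂_le fun f _ => iSup_le fun hnorm => rearr_le_of_ae_le ?_ t
  have hg : Measurable fun y => ENNReal.ofReal (‖f y‖ ^ p) := by fun_prop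
  filter_upwards [ae_le_of_setLIntegral_closedBall_le hg hK
    fun x ρ hρ => setLIntegral_closedBall_le_of_morreyNorm_le hp hnorm hc hcφ x hρ] with x hx
  rwa [ENNReal.le_rpow_inv_iff hp, ENNReal.ofReal_rpow_of_nonneg (norm_nonneg _) hp.le]

theorem ofReal_inv_le_morreyEnvelope (hp : 0 < p) (hφ : GClass n p φ) {r t : ℝ} (hr : 0 < r)
    (ht : t < r ^ n) : ENNReal.ofReal (φ r)⁻¹ ≤ morreyEnvelope n p φ t := by
  have hφr := hφ.1 r hr
  have hnorm : morreyNorm n p φ ((cube n 0 r).indicator fun _ => (φ r)⁻¹) ≤ 1 := by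
    simpa [hφr.ne'] using morreyNorm_indicator_cube_le hp hφ 0 hr (inv_nonneg.2 hφr.le)
  have hmeas : Measurable ((cube n 0 r).indicator fun _ => (φ r)⁻¹) :=
    measurable_const.indicator (measurableSet_cube n 0 r)
  exact (le_rearr_indicator_cube 0 hr (inv_pos.2 hφr) ht).trans
    (le_iSup₂_of_le _ hmeas (le_iSup_of_le hnorm le_rfl))

end Morrey

theorem statement0_general (n : ℕ) (p : ℝ) (hp : 0 < p) (φ : ℝ → ℝ)
    (hφ : GClass n p φ) :
    (∃ C : ℝ≥0∞, C ≠ ⊤ ∧ ∀ t : ℝ, 0 < t → morreyEnvelope n p φ t ≤ C) ↔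
      ∃ c : ℝ, 0 < c ∧ Filter.Tendsto φ (nhdsWithin 0 (Set.Ioi 0)) (nhds c) := by
  constructor
  · rintro ⟨C, hC, hbound⟩
    have hφC : ∀ r, 0 < r → (C.toReal + 1)⁻¹ ≤ φ r := fun r hr => by
      have h := (ofReal_inv_le_morreyEnvelope hp hφ hr (half_lt_self (pow_pos hr n))).trans
        (hbound _ (by positivity))
      rw [ENNReal.ofReal_le_iff_le_toReal hC] at h
      rw [inv_le_comm₀ (by positivity) (hφ.1 r hr)]
      linarith
    refine ⟨_, ?_, hφ.tendsto_nhdsGT_sInf⟩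
    exact (inv_pos.2 (by positivity)).trans_le
      (le_csInf ⟨φ 1, 1, mem_Ioi.2 one_pos, rfl⟩ fun _ ⟨r, hr, hφr⟩ => hφr ▸ hφC r hr)
  · rintro ⟨c, hc, hlim⟩
    obtain ⟨C, hC, hbound⟩ := exists_morreyEnvelope_le hp hc fun t ht => hφ.le_of_tendsto hlim ht
    exact ⟨C, hC, fun t _ => hbound t⟩

/-- For `0<p<∞` and `φ ∈ 𝒢_p` with `φ(1)=1`, the growth envelope function
of `ℳ_{φ,p}(ℝⁿ)` is bounded on `(0,∞)` iff `lim_{t→0⁺} φ(t) > 0`. -/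
theorem statement0 (n : ℕ) (hn : 0 < n) (p : ℝ) (hp : 0 < p) (φ : ℝ → ℝ)
    (hφ : GClass n p φ) (hφ1 : φ 1 = 1) :
    (∃ C : ℝ≥0∞, C ≠ ⊤ ∧ ∀ t : ℝ, 0 < t → morreyEnvelope n p φ t ≤ C) ↔
      ∃ c : ℝ, 0 < c ∧ Filter.Tendsto φ (nhdsWithin 0 (Set.Ioi 0)) (nhds c) :=
  statement0_general n p hp φ hφ
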